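/- arXiv:1904.07135 — 2 statements merged into one kernel-verified Lean document; each statement's English description precedes it below -/
import Mathlib

section
/- For all integers k ≥ 2 and 1 ≤ a ≤ k, one has (a+1) · Σ_{1 ≤ i < j ≤ k} C(k-(j-i)-1, a-1) = k·(k-a)·C(k-1, a-1), where C denotes the binomial coefficient. Equivalently, the probability that two uniformly chosen distinct elements of {1,...,k} lie in the same part of a uniformly random composition of k into a (positive) parts equals (2/(a+1))·(k-a)/(k-1). -/
/-!
Group the pairs `i < j` by `m = k - (j - i)`: exactly `m` pairs give the value `m`, so the sum is
`∑_{m < k} m · C(m-1, a-1) = a · ∑_{m < k} C(m, a) = a · C(k, a+1)` by absorption and the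
hockey-stick identity. Absorption twice more turns `(a+1) · a · C(k, a+1)` into
`k · (k-a) · C(k-1, a-1)`.
-/

open Finset

theorem Finset.sum_Icc_pairs_lt_eq_sum_range_nsmul {M : Type*} [AddCommMonoid M] (k : ℕ)
    (f : ℕ → M) :
    ∑ p ∈ (Icc 1 k ×ˢ Icc 1 k).filter (fun p => p.1 < p.2), f (k - (p.2 - p.1))
      = ∑ m ∈ range k, m • f m := by
  have hfiber : ∑ m ∈ range k, m • f m = ∑ x ∈ (range k).sigma (fun m => Icc 1 m), f x.1 := by
    rw [sum_sigma]
    exact sum_congr rfl fun m _ => by simp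
  rw [hfiber]
  refine sum_nbij' (fun p => ⟨k - (p.2 - p.1), p.1⟩) (fun x => (x.2, x.2 + k - x.1))
    ?_ ?_ ?_ ?_ fun _ _ => rfl
  · intro p hp
    simp only [mem_filter, mem_product, mem_Icc] at hp
    simp only [mem_sigma, mem_range, mem_Icc]
    omega
  · intro x hx
    simp only [mem_sigma, mem_range, mem_Icc] at hx
    simp only [mem_filter, mem_product, mem_Icc]
    omega
  · intro p hp
    simp only [mem_filter, mem_product, mem_Icc] at hp
    ext
    · rfl
    · simp only
      omega
  · rintro ⟨m, i⟩ hx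
    simp only [mem_sigma, mem_range, mem_Icc] at hx
    simp only [Sigma.mk.injEq, heq_eq_eq, and_true]
    omega

namespace Nat

theorem mul_choose_sub_one_sub_one (m : ℕ) {a : ℕ} (ha : 1 ≤ a) :
    m * (m - 1).choose (a - 1) = a * m.choose a := by
  obtain ⟨b, rfl⟩ : ∃ b, a = b + 1 := ⟨a - 1, by omega⟩
  rcases m with _ | n
  · simp
  · simpa [add_comm 1, mul_comm] using add_one_mul_choose_eq n b

theorem sum_range_choose_eq_choose_add_one (k a : ℕ) :
    ∑ m ∈ range k, m.choose a = k.choose (a + 1) := by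
  induction k with
  | zero => simp
  | succ k ih => rw [sum_range_succ, ih, choose_succ_succ', add_comm]

theorem add_one_mul_mul_choose_add_one {a : ℕ} (k : ℕ) (ha : 1 ≤ a) :
    (a + 1) * (a * k.choose (a + 1)) = k * (k - a) * (k - 1).choose (a - 1) := by
  obtain ⟨b, rfl⟩ : ∃ b, a = b + 1 := ⟨a - 1, by omega⟩
  rcases k with _ | n
  · simp
  have hk : (b + 2) * (n + 1).choose (b + 2) = (n + 1) * n.choose (b + 1) := by
    rw [add_one_mul_choose_eq, mul_comm]
  have hb : (b + 1) * n.choose (b + 1) = (n - b) * n.choose b := by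
    rw [mul_comm, choose_succ_right_eq, mul_comm]
  calc (b + 1 + 1) * ((b + 1) * (n + 1).choose (b + 1 + 1))
      = (b + 1) * ((b + 2) * (n + 1).choose (b + 2)) := by ring
    _ = (n + 1) * ((b + 1) * n.choose (b + 1)) := by rw [hk]; ring
    _ = (n + 1) * (n + 1 - (b + 1)) * (n + 1 - 1).choose (b + 1 - 1) := by
      rw [hb, Nat.add_sub_add_right, Nat.add_sub_cancel, Nat.add_sub_cancel, mul_assoc]

end Nat

theorem stmt0_general (k a : ℕ) (ha1 : 1 ≤ a) :
    (a + 1) *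
      ∑ p ∈ (Finset.Icc 1 k ×ˢ Finset.Icc 1 k).filter (fun p => p.1 < p.2),
        Nat.choose (k - (p.2 - p.1) - 1) (a - 1)
      = k * (k - a) * Nat.choose (k - 1) (a - 1) := by
  rw [sum_Icc_pairs_lt_eq_sum_range_nsmul k (fun m => (m - 1).choose (a - 1))]
  simp only [smul_eq_mul, Nat.mul_choose_sub_one_sub_one _ ha1, ← mul_sum,
    Nat.sum_range_choose_eq_choose_add_one]
  exact Nat.add_one_mul_mul_choose_add_one k ha1

/-- For all integers `k ≥ 2` and `1 ≤ a ≤ k`,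
`(a+1) · Σ_{1 ≤ i < j ≤ k} C(k-(j-i)-1, a-1) = k·(k-a)·C(k-1, a-1)`. -/
theorem stmt0 (k a : ℕ) (hk : 2 ≤ k) (ha1 : 1 ≤ a) (hak : a ≤ k) :
    (a + 1) *
      ∑ p ∈ (Finset.Icc 1 k ×ˢ Finset.Icc 1 k).filter (fun p => p.1 < p.2),
        Nat.choose (k - (p.2 - p.1) - 1) (a - 1)
      = k * (k - a) * Nat.choose (k - 1) (a - 1) :=
  stmt0_general k a ha1
end

section
/- For every integer a ≥ 1 and every real t with |t| < 1, Σ_{k ≥ a} ( C(k-1, a-1) - (2/(a+1))·C(k-2, a-1) )·k(k-1)·t^{k-1} = a(a-1)·t^{a-1}/(1-t)^{a+2}. -/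
private lemma coeff_id (b m : ℕ) (hbm : b ≤ m + 1) :
    ((Nat.choose (m + 1) b : ℝ)
        - 2 / ((b : ℝ) + 1 + 1) * (Nat.choose m b : ℝ))
      * ((m : ℝ) + 2) * ((m : ℝ) + 1)
    = ((b : ℝ) + 1) * (b : ℝ) * (Nat.choose (m + 3) (b + 2) : ℝ) := by
  have A : ((m : ℝ) + 2) * (Nat.choose (m + 1) b : ℝ)
      = (Nat.choose (m + 2) (b + 1) : ℝ) * ((b : ℝ) + 1) := by
    exact_mod_cast congrArg (Nat.cast (R := ℝ)) (Nat.add_one_mul_choose_eq (m + 1) b)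
  have B : ((m : ℝ) + 1) * (Nat.choose m b : ℝ)
      = (Nat.choose (m + 1) (b + 1) : ℝ) * ((b : ℝ) + 1) := by
    exact_mod_cast congrArg (Nat.cast (R := ℝ)) (Nat.add_one_mul_choose_eq m b)
  have C : (Nat.choose (m + 3) (b + 2) : ℝ)
      = (Nat.choose (m + 2) (b + 1) : ℝ) + (Nat.choose (m + 2) (b + 2) : ℝ) := by
    exact_mod_cast congrArg (Nat.cast (R := ℝ)) (Nat.choose_succ_succ (m + 2) (b + 1))
  have D : (Nat.choose (m + 2) (b + 2) : ℝ) * ((b : ℝ) + 2)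
      = (Nat.choose (m + 2) (b + 1) : ℝ) * ((m : ℝ) + 1 - (b : ℝ)) := by
    have h := Nat.choose_succ_right_eq (m + 2) (b + 1)
    have hsub : (m + 2) - (b + 1) = m + 1 - b := by omega
    rw [hsub] at h
    have h' := congrArg (Nat.cast (R := ℝ)) h
    push_cast [Nat.cast_sub (by omega : b ≤ m + 1)] at h'
    linarith [h']
  have E : (Nat.choose (m + 2) (b + 1) : ℝ)
      = (Nat.choose (m + 1) b : ℝ) + (Nat.choose (m + 1) (b + 1) : ℝ) := by
    exact_mod_cast congrArg (Nat.cast (R := ℝ)) (Nat.choose_succ_succ (m + 1) b)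
  have hb2 : ((b : ℝ) + 1 + 1) ≠ 0 := by positivity
  field_simp
  linear_combination (((b : ℝ) + 2) * ((m : ℝ) + 1) + 2 * ((b : ℝ) + 1)) * A
    - 2 * ((m : ℝ) + 2) * B
    - (b : ℝ) * ((b : ℝ) + 1) * ((b : ℝ) + 2) * C
    - (b : ℝ) * ((b : ℝ) + 1) * D
    + 2 * ((b : ℝ) + 1) * ((m : ℝ) + 2) * E

private lemma coeff_k (a k : ℕ) (ha : 1 ≤ a) (hak : a ≤ k) :
    ((Nat.choose (k - 1) (a - 1) : ℝ)
        - 2 / ((a : ℝ) + 1) * (Nat.choose (k - 2) (a - 1) : ℝ))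
      * (k : ℝ) * ((k : ℝ) - 1)
    = (a : ℝ) * ((a : ℝ) - 1) * (Nat.choose (k + 1) (a + 1) : ℝ) := by
  obtain ⟨b, rfl⟩ : ∃ b, a = b + 1 := ⟨a - 1, by omega⟩
  rcases Nat.lt_or_ge k 2 with hk | hk
  · have hk1 : k = 1 := by omega
    have hb0 : b = 0 := by omega
    subst hk1 hb0
    norm_num
  · obtain ⟨m, rfl⟩ : ∃ m, k = m + 2 := ⟨k - 2, by omega⟩
    have h1 : m + 2 - 1 = m + 1 := by omega
    have h2 : m + 2 - 2 = m := by omega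
    have h3 : b + 1 - 1 = b := by omega
    rw [h1, h2, h3]
    have := coeff_id b m (by omega)
    push_cast at this ⊢
    linarith [this]

/-- For every integer `a ≥ 1` and every real `t` with `|t| < 1`,
`Σ_{k ≥ a} (C(k-1,a-1) - (2/(a+1))·C(k-2,a-1))·k(k-1)·t^(k-1)
  = a(a-1)·t^(a-1)/(1-t)^(a+2)`. -/
theorem stmt2 (a : ℕ) (ha : 1 ≤ a) (t : ℝ) (ht : |t| < 1) :
    HasSum
      (fun k : ℕ => if a ≤ k then
        ((Nat.choose (k - 1) (a - 1) : ℝ)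
          - 2 / ((a : ℝ) + 1) * (Nat.choose (k - 2) (a - 1) : ℝ))
          * (k : ℝ) * ((k : ℝ) - 1) * t ^ (k - 1)
      else 0)
      ((a : ℝ) * ((a : ℝ) - 1) * t ^ (a - 1) / (1 - t) ^ (a + 2)) := by
  set f : ℕ → ℝ := fun k : ℕ => if a ≤ k then
        ((Nat.choose (k - 1) (a - 1) : ℝ)
          - 2 / ((a : ℝ) + 1) * (Nat.choose (k - 2) (a - 1) : ℝ))
          * (k : ℝ) * ((k : ℝ) - 1) * t ^ (k - 1)
      else 0 with hf
  have hnorm : ‖t‖ < 1 := by rwa [Real.norm_eq_abs]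
  have h1 := hasSum_choose_mul_geometric_of_norm_lt_one (𝕜 := ℝ) (a + 1) hnorm
  have h2 := h1.mul_left ((a : ℝ) * ((a : ℝ) - 1) * t ^ (a - 1))
  have h3 : HasSum (fun n : ℕ => f (n + a))
      ((a : ℝ) * ((a : ℝ) - 1) * t ^ (a - 1) * (1 / (1 - t) ^ (a + 1 + 1))) := by
    refine HasSum.congr_fun h2 ?_
    intro n
    have hle : a ≤ n + a := Nat.le_add_left a n
    simp only [hf, if_pos hle]
    have hc := coeff_k a (n + a) ha hle
    have hpow : n + a - 1 = (a - 1) + n := by omega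
    rw [hc, hpow, pow_add, show n + (a + 1) = n + a + 1 from rfl]
    ring
  have h4 := (hasSum_nat_add_iff (f := f) a).mp h3
  have h5 : ∑ i ∈ Finset.range a, f i = 0 := by
    refine Finset.sum_eq_zero fun i hi => ?_
    simp only [Finset.mem_range] at hi
    exact if_neg (by omega)
  rw [h5, add_zero] at h4
  have heq : (a : ℝ) * ((a : ℝ) - 1) * t ^ (a - 1) * (1 / (1 - t) ^ (a + 1 + 1))
      = (a : ℝ) * ((a : ℝ) - 1) * t ^ (a - 1) / (1 - t) ^ (a + 2) := by
    rw [mul_one_div]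
  rwa [heq] at h4
end
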